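/- Let n > 2 be even and let A be the matrix of rotation symmetric Boolean functions on F_2^n. Then Tr(A) = (1/n) * 2^(n/2) * sum over divisors d of n such that n/d is even of phi(n/d) * 2^d. In particular, Tr(A) > 0. -/

import Mathlib

open Finset

/-- Cyclic shift on `F_2^n`: `(shift x) i = x (i+1)`. -/
def shift (n : ℕ) (x : Fin n → ZMod 2) : Fin n → ZMod 2 := fun i => x (finRotate n i)

/-- Dot product on `F_2^n`. -/
def dot (n : ℕ) (x y : Fin n → ZMod 2) : ZMod 2 := ∑ i, x i * y i

/-- `(-1)^b` as an integer. -/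
def sgn (b : ZMod 2) : ℤ := if b = 0 then 1 else -1

/-- The orbit of `x` under cyclic shifts. -/
def orbit (n : ℕ) (x : Fin n → ZMod 2) : Finset (Fin n → ZMod 2) :=
  Finset.image (fun k : Fin n => (shift n)^[(k : ℕ)] x) Finset.univ

/-- The set of orbits of the cyclic shift action on `F_2^n`. -/
def orbits (n : ℕ) : Finset (Finset (Fin n → ZMod 2)) :=
  Finset.image (orbit n) Finset.univ

/-- `g_n`, the number of orbits. -/
def numOrbits (n : ℕ) : ℕ := (orbits n).card

/-- Encoding of a vector as a natural number, first coordinate most significant,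
so the lexicographic order on vectors is the order of `vecToNat`. -/
def vecToNat (n : ℕ) (x : Fin n → ZMod 2) : ℕ := ∑ i : Fin n, (x i).val * 2 ^ (n - 1 - (i : ℕ))

/-- The lexicographically least element of an orbit. -/
noncomputable def lam (n : ℕ) (O : Finset (Fin n → ZMod 2)) : Fin n → ZMod 2 :=
  if h : ∃ x ∈ O, ∀ y ∈ O, vecToNat n x ≤ vecToNat n y then h.choose else 0

/-- The matrix `ₙ𝒜` of rotation symmetric Boolean functions. -/
noncomputable def rsbfMatrix (n : ℕ) :
    Matrix {O // O ∈ orbits n} {O // O ∈ orbits n} ℤ :=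
  fun i j => ∑ x ∈ i.1, sgn (dot n x (lam n j.1))

/-! The diagonal entry at an orbit `O` is `∑_{x ∈ O} (-1)^{x · Λ}` for any representative `Λ` of
`O`, and averaging over the representatives gives `n · A_OO = ∑_{y ∈ O} ∑_{k<n} (-1)^{σ^k y · y}`.
Summing over the orbits, `n · Tr A = ∑_{k<n} S_k` with `S_k = ∑_y (-1)^{∑_i y_{i+k} y_i}` over
`y : ℤ/n → 𝔽₂`. Indexing `ℤ/n` by `(r, j) ↦ r + j k` with `r < g = gcd(n, k)` and `j ∈ ℤ/m`,
`m = n/g`, splits the quadratic form into `g` cycles of length `m`, so `S_k = T_m ^ g` where `T_m`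
is the sum for a single `m`-cycle. Adding the all-ones vector flips every sign when `m` is odd, so
`T_m = 0`; for `m = 2t`, summing out the odd positions forces `y` to be constant on the even ones,
so `T_m = 2^{t+1}`. Grouping `k` by `gcd(n, k)` gives the totient-weighted divisor sum. -/

open Function

lemma sgn_one : sgn 1 = -1 := rfl

lemma sgn_add (a b : ZMod 2) : sgn (a + b) = sgn a * sgn b := by
  revert a b; decide

lemma sgn_sum {α : Type*} (s : Finset α) (f : α → ZMod 2) :
    sgn (∑ i ∈ s, f i) = ∏ i ∈ s, sgn (f i) := by
  induction s using Finset.cons_induction with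
  | empty => rfl
  | cons a s ha ih => rw [sum_cons, prod_cons, sgn_add, ih]

lemma sum_sgn_mul (c : ZMod 2) : ∑ b : ZMod 2, sgn (b * c) = if c = 0 then 2 else 0 := by
  revert c; decide

lemma sum_sgn_sum_mul {ι : Type*} [Fintype ι] [DecidableEq ι] (c : ι → ZMod 2) :
    ∑ b : ι → ZMod 2, sgn (∑ i, b i * c i) = if c = 0 then 2 ^ Fintype.card ι else 0 := by
  simp only [sgn_sum]
  rw [← Fintype.prod_sum fun i (b : ZMod 2) => sgn (b * c i)]
  simp only [sum_sgn_mul, prod_ite_zero, prod_const, card_univ, mem_univ, true_implies, funext_iff,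
    Pi.zero_apply]

lemma sum_arrow_eq_sum_curry {X ι κ β M : Type*} [Fintype X] [DecidableEq X] [Fintype ι]
    [DecidableEq ι] [Fintype κ] [DecidableEq κ] [Fintype β] [AddCommMonoid M]
    (e : ι × κ ≃ X) (f : (X → β) → M) :
    ∑ y, f y = ∑ u : ι → κ → β, f fun x => u (e.symm x).1 (e.symm x).2 :=
  (Fintype.sum_equiv ((Equiv.curry ι κ β).symm.trans (e.arrowCongr (Equiv.refl β))) _ _
    fun _ => rfl).symm

section CycleSum

variable {G H ι : Type*} [Fintype G] [DecidableEq G]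

def cycleSum [Add G] (a : G) : ℤ := ∑ y : G → ZMod 2, sgn (∑ i, y (i + a) * y i)

lemma cycleSum_map [Add G] [Add H] [Fintype H] [DecidableEq H] (e : G ≃+ H) (a : G) :
    cycleSum (e a) = cycleSum a := by
  unfold cycleSum
  rw [← (e.toEquiv.arrowCongr (Equiv.refl (ZMod 2))).sum_comp]
  refine sum_congr rfl fun y _ => congrArg sgn ?_
  rw [← e.toEquiv.sum_comp]
  simp [Equiv.arrowCongr_apply, ← map_add]

lemma cycleSum_eq_zero_of_odd_card [AddGroup G] (h : Odd (Fintype.card G)) (a : G) :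
    cycleSum a = 0 := by
  have hflip : ∀ y : G → ZMod 2, ∑ i, (y + 1) (i + a) * (y + 1) i = ∑ i, y (i + a) * y i + 1 := by
    intro y
    have hshift : ∑ i, y (i + a) = ∑ i, y i := Equiv.sum_comp (Equiv.addRight a) y
    have hcard : ((Fintype.card G : ℕ) : ZMod 2) = 1 := ZMod.natCast_eq_one_iff_odd.2 h
    simp only [Pi.add_apply, Pi.one_apply, add_mul, mul_add, mul_one, one_mul, sum_add_distrib,
      hshift, sum_const, card_univ, nsmul_eq_mul, hcard]
    have two : (2 : ZMod 2) = 0 := rfl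
    linear_combination (∑ i, y i) * two
  have : cycleSum a = -cycleSum a := by
    conv_lhs => rw [cycleSum, ← Equiv.sum_comp (Equiv.addRight (1 : G → ZMod 2))]
    rw [cycleSum, ← sum_neg_distrib]
    refine sum_congr rfl fun y _ => ?_
    rw [Equiv.coe_addRight, hflip, sgn_add, sgn_one, mul_neg_one]
  omega

lemma cycleSum_eq_pow [Add G] [Fintype ι] [DecidableEq ι] {m : ℕ} [NeZero m] (e : ι × ZMod m ≃ G)
    {a : G} (he : ∀ r j, e (r, j + 1) = e (r, j) + a) :
    cycleSum a = cycleSum (1 : ZMod m) ^ Fintype.card ι := by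
  rw [cycleSum, sum_arrow_eq_sum_curry e, cycleSum, ← card_univ, ← prod_const,
    Fintype.prod_sum fun _ (w : ZMod m → ZMod 2) => sgn (∑ j, w (j + 1) * w j)]
  refine sum_congr rfl fun u _ => ?_
  rw [← Equiv.sum_comp e, Fintype.sum_prod_type, sgn_sum]
  simp [← he]

end CycleSum

lemma ZMod.val_add_one_nsmul {G : Type*} [AddMonoid G] {m : ℕ} [NeZero m] {a : G}
    (ha : addOrderOf a = m) (j : ZMod m) : (j + 1).val • a = j.val • a + a := by
  subst ha
  rw [ZMod.val_add, ZMod.val_one_eq_one_mod, mod_addOrderOf_nsmul, add_nsmul,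
    mod_addOrderOf_nsmul, one_nsmul]

lemma bijective_cycleIndex {n g m K : ℕ} [NeZero n] (hgm : g * m = n) (hgK : g ∣ K)
    (hK : addOrderOf (K : ZMod n) = m) :
    Bijective fun p : Fin g × ZMod m => ((p.1 : ℕ) : ZMod n) + p.2.val • (K : ZMod n) := by
  have : NeZero m := ⟨by rintro rfl; exact NeZero.ne n (by simpa using hgm.symm)⟩
  refine (Fintype.bijective_iff_injective_and_card _).2 ⟨?_, by simp [hgm]⟩
  rintro ⟨r, j⟩ ⟨r', j'⟩ h
  have hr : r = r' := by
    have := congrArg (ZMod.castHom (Dvd.intro m hgm) (ZMod g)) h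
    simp only [map_add, map_natCast, map_nsmul, (ZMod.natCast_eq_zero_iff K g).2 hgK, nsmul_zero,
      add_zero, ZMod.natCast_eq_natCast_iff', Nat.mod_eq_of_lt r.isLt, Nat.mod_eq_of_lt r'.isLt]
      at this
    exact Fin.ext this
  subst hr
  have hj := nsmul_injOn_Iio_addOrderOf (hK ▸ ZMod.val_lt j) (hK ▸ ZMod.val_lt j')
    (add_left_cancel h)
  simp only at hj
  rw [ZMod.val_injective m hj]

noncomputable def cycleIndex {n g m K : ℕ} [NeZero n] (hgm : g * m = n) (hgK : g ∣ K)
    (hK : addOrderOf (K : ZMod n) = m) : Fin g × ZMod m ≃ ZMod n :=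
  Equiv.ofBijective _ (bijective_cycleIndex hgm hgK hK)

section CycleIndex

variable {n g m K : ℕ} [NeZero n] (hgm : g * m = n) (hgK : g ∣ K)
  (hK : addOrderOf (K : ZMod n) = m)

lemma cycleIndex_apply (r : Fin g) (j : ZMod m) :
    cycleIndex hgm hgK hK (r, j) = ((r : ℕ) : ZMod n) + j.val • (K : ZMod n) := rfl

lemma cycleIndex_add_one [NeZero m] (r : Fin g) (j : ZMod m) :
    cycleIndex hgm hgK hK (r, j + 1) = cycleIndex hgm hgK hK (r, j) + K := by
  rw [cycleIndex_apply, cycleIndex_apply, ZMod.val_add_one_nsmul hK, add_assoc]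

end CycleIndex

lemma card_filter_forall_add_one_eq {α : Type*} [Fintype α] [DecidableEq α] (t : ℕ) [NeZero t] :
    #{a : ZMod t → α | ∀ j, a j = a (j + 1)} = Fintype.card α := by
  have hconst : (univ.filter fun a : ZMod t → α => ∀ j, a j = a (j + 1)) =
      univ.map ⟨const (ZMod t), const_injective⟩ := by
    ext a
    simp only [mem_filter, mem_univ, true_and, mem_map, Embedding.coeFn_mk]
    refine ⟨fun h => ⟨a 0, funext fun j => ?_⟩, by rintro ⟨c, rfl⟩ _; rfl⟩
    rw [const_apply, ← ZMod.natCast_zmod_val j]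
    induction j.val with
    | zero => rw [Nat.cast_zero]
    | succ k ih => rw [Nat.cast_succ, ← h, ih]
  rw [hconst, card_map, card_univ]

lemma cycleSum_one_two_mul (t : ℕ) [NeZero t] : cycleSum (1 : ZMod (2 * t)) = 2 ^ (t + 1) := by
  have hord : addOrderOf ((2 : ℕ) : ZMod (2 * t)) = t := by
    rw [ZMod.addOrderOf_coe 2 (NeZero.ne _)]
    simp
  set e := cycleIndex rfl (dvd_refl 2) hord
  have hQ : ∀ u : Fin 2 → ZMod t → ZMod 2,
      ∑ i, u (e.symm (i + 1)).1 (e.symm (i + 1)).2 * u (e.symm i).1 (e.symm i).2 =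
        ∑ j, u 1 j * (u 0 j + u 0 (j + 1)) := by
    intro u
    have h01 : ∀ j, e (0, j) + 1 = e (1, j) := fun j => by
      simp [e, cycleIndex_apply, add_comm]
    have h10 : ∀ j, e (1, j) + 1 = e (0, j + 1) := fun j => by
      rw [show e (0, j + 1) = e (0, j) + ((2 : ℕ) : ZMod (2 * t)) from cycleIndex_add_one .., ← h01,
        add_assoc]
      norm_num
    rw [← Equiv.sum_comp e, Fintype.sum_prod_type, Fin.sum_univ_two, ← sum_add_distrib]
    simp only [Equiv.symm_apply_apply, h01, h10]
    exact sum_congr rfl fun j _ => by ring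
  rw [cycleSum, sum_arrow_eq_sum_curry e]
  simp only [hQ]
  rw [← Equiv.sum_comp (piFinTwoEquiv fun _ => ZMod t → ZMod 2).symm, Fintype.sum_prod_type]
  simp only [piFinTwoEquiv_symm_apply, Fin.cons_zero, Fin.cons_one]
  simp only [sum_sgn_sum_mul, funext_iff, Pi.zero_apply, CharTwo.add_eq_zero]
  rw [sum_ite, sum_const_zero, add_zero, sum_const, card_filter_forall_add_one_eq, ZMod.card,
    ZMod.card, nsmul_eq_mul, pow_succ]
  norm_num [mul_comm]

lemma cycleSum_one (m : ℕ) [NeZero m] :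
    cycleSum (1 : ZMod m) = if Even m then 2 ^ (m / 2 + 1) else 0 := by
  split_ifs with hm
  · obtain ⟨t, rfl⟩ := even_iff_two_dvd.1 hm
    have : NeZero t := ⟨by rintro rfl; exact NeZero.ne (2 * 0) rfl⟩
    rw [cycleSum_one_two_mul, Nat.mul_div_cancel_left t two_pos]
  · exact cycleSum_eq_zero_of_odd_card (by rwa [ZMod.card, ← Nat.not_even_iff_odd]) 1

lemma cycleSum_natCast (n K : ℕ) [NeZero n] :
    cycleSum (K : ZMod n) = if Even (n / n.gcd K) then 2 ^ (n / 2 + n.gcd K) else 0 := by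
  set g := n.gcd K
  set m := n / g
  have hgm : g * m = n := Nat.mul_div_cancel' (Nat.gcd_dvd_left n K)
  have : NeZero m := ⟨fun h => NeZero.ne n (by rw [← hgm, h, mul_zero])⟩
  have hK : addOrderOf (K : ZMod n) = m := ZMod.addOrderOf_coe K (NeZero.ne n)
  have hgK : g ∣ K := Nat.gcd_dvd_right n K
  rw [cycleSum_eq_pow (cycleIndex hgm hgK hK) (cycleIndex_add_one hgm hgK hK), cycleSum_one,
    Fintype.card_fin]
  split_ifs with hm
  · obtain ⟨t, ht⟩ := hm
    rw [← pow_mul, ← hgm, ht, show g * (t + t) = 2 * (g * t) by ring,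
      Nat.mul_div_cancel_left _ two_pos, show (t + t) / 2 = t by omega]
    ring_nf
  · exact zero_pow (Nat.gcd_pos_of_pos_left K (NeZero.pos n)).ne'

lemma Function.IsPeriodicPt.sum_range_mul_iterate {α M : Type*} [AddCommMonoid M] {f : α → α}
    {p : ℕ} {x : α} (h : IsPeriodicPt f p x) (g : α → M) (q : ℕ) :
    ∑ k ∈ range (q * p), g (f^[k] x) = q • ∑ k ∈ range p, g (f^[k] x) := by
  induction q with
  | zero => simp
  | succ q ih =>
    rw [Nat.succ_mul, sum_range_add, ih, succ_nsmul]
    refine congrArg _ (sum_congr rfl fun k _ => ?_)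
    rw [add_comm, iterate_add_apply, (h.const_mul q).eq]

lemma sum_range_comp_gcd {M : Type*} [AddCommMonoid M] (n : ℕ) (f : ℕ → M) :
    ∑ k ∈ range n, f (n.gcd k) = ∑ d ∈ n.divisors, Nat.totient (n / d) • f d := by
  rcases eq_or_ne n 0 with rfl | hn
  · simp
  rw [← sum_fiberwise_of_maps_to (g := n.gcd) (t := n.divisors)
    fun k _ => Nat.mem_divisors.2 ⟨Nat.gcd_dvd_left n k, hn⟩]
  refine sum_congr rfl fun d hd => ?_
  rw [sum_congr rfl fun k hk => by rw [(mem_filter.1 hk).2], sum_const,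
    ← Nat.totient_div_of_dvd (Nat.dvd_of_mem_divisors hd)]

open Fin.NatCast

section Shift

variable {n : ℕ}

lemma dot_shift (x y : Fin n → ZMod 2) : dot n (shift n x) (shift n y) = dot n x y :=
  Equiv.sum_comp (finRotate n) fun i => x i * y i

variable [NeZero n]

lemma iterate_shift_apply (k : ℕ) (x : Fin n → ZMod 2) (i : Fin n) :
    (shift n)^[k] x i = x (i + k) := by
  induction k generalizing x with
  | zero => simp
  | succ k ih => rw [iterate_succ_apply, ih, shift, finRotate_apply, Nat.cast_succ, add_assoc]

lemma isPeriodicPt_shift (x : Fin n → ZMod 2) : IsPeriodicPt (shift n) n x :=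
  funext fun i => by rw [iterate_shift_apply, Fin.natCast_self, add_zero]

lemma iterate_shift_mem_orbit (k : ℕ) (x : Fin n → ZMod 2) : (shift n)^[k] x ∈ orbit n x :=
  mem_image.2 ⟨⟨k % n, Nat.mod_lt _ (NeZero.pos n)⟩, mem_univ _,
    (isPeriodicPt_shift x).iterate_mod_apply k⟩

lemma orbit_eq_image_range (x : Fin n → ZMod 2) :
    orbit n x = (range (minimalPeriod (shift n) x)).image fun k => (shift n)^[k] x := by
  have hpos := (isPeriodicPt_shift x).minimalPeriod_pos (NeZero.pos n)
  have hle := Nat.le_of_dvd (NeZero.pos n) (isPeriodicPt_shift x).minimalPeriod_dvd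
  ext y
  simp only [orbit, mem_image, mem_univ, true_and, mem_range]
  constructor
  · rintro ⟨k, rfl⟩
    exact ⟨k % _, Nat.mod_lt _ hpos, iterate_mod_minimalPeriod_eq⟩
  · rintro ⟨k, hk, rfl⟩
    exact ⟨⟨k, hk.trans_le hle⟩, rfl⟩

lemma card_orbit (x : Fin n → ZMod 2) : #(orbit n x) = minimalPeriod (shift n) x := by
  rw [orbit_eq_image_range, card_image_of_injOn, card_range]
  exact fun a ha b hb => iterate_injOn_Iio_minimalPeriod (by simpa using ha) (by simpa using hb)

lemma orbit_iterate_shift (k : ℕ) (x : Fin n → ZMod 2) :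
    orbit n ((shift n)^[k] x) = orbit n x := by
  refine eq_of_subset_of_card_le (fun y hy => ?_) ?_
  · obtain ⟨j, -, rfl⟩ := mem_image.1 hy
    rw [← iterate_add_apply]
    exact iterate_shift_mem_orbit _ x
  · rw [card_orbit, card_orbit, minimalPeriod_apply_iterate
      (mk_mem_periodicPts (NeZero.pos n) (isPeriodicPt_shift x))]

lemma mem_orbit_iff_orbit_eq {x y : Fin n → ZMod 2} : y ∈ orbit n x ↔ orbit n y = orbit n x :=
  ⟨fun h => by obtain ⟨k, -, rfl⟩ := mem_image.1 h; exact orbit_iterate_shift _ x,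
    fun h => h ▸ iterate_shift_mem_orbit 0 y⟩

lemma sum_orbits {M : Type*} [AddCommMonoid M] (f : (Fin n → ZMod 2) → M) :
    ∑ O ∈ orbits n, ∑ y ∈ O, f y = ∑ y, f y := by
  rw [← sum_fiberwise_of_maps_to (g := orbit n) (t := orbits n)
    fun y _ => mem_image_of_mem _ (mem_univ y)]
  refine sum_congr rfl fun O hO => ?_
  obtain ⟨x, -, rfl⟩ := mem_image.1 hO
  congr 1
  ext y
  simp [mem_orbit_iff_orbit_eq]

lemma sum_range_iterate_shift {M : Type*} [AddCommMonoid M] (g : (Fin n → ZMod 2) → M)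
    (x : Fin n → ZMod 2) :
    ∑ k ∈ range n, g ((shift n)^[k] x) = (n / #(orbit n x)) • ∑ y ∈ orbit n x, g y := by
  have hn : range n = range (n / minimalPeriod (shift n) x * minimalPeriod (shift n) x) := by
    rw [Nat.div_mul_cancel (isPeriodicPt_shift x).minimalPeriod_dvd]
  rw [hn, (isPeriodicPt_minimalPeriod _ x).sum_range_mul_iterate, card_orbit, orbit_eq_image_range,
    sum_image fun a ha b hb => iterate_injOn_Iio_minimalPeriod (by simpa using ha)
      (by simpa using hb)]

end Shift

def shiftCorrelation (n : ℕ) (y : Fin n → ZMod 2) : ℤ :=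
  ∑ k ∈ range n, sgn (dot n ((shift n)^[k] y) y)

section Orbits

variable {n : ℕ}

lemma shiftCorrelation_shift (y : Fin n → ZMod 2) :
    shiftCorrelation n (shift n y) = shiftCorrelation n y := by
  refine sum_congr rfl fun k _ => ?_
  rw [← iterate_succ_apply, iterate_succ_apply', dot_shift]

variable [NeZero n]

lemma sum_orbit_shiftCorrelation (x : Fin n → ZMod 2) :
    ∑ y ∈ orbit n x, shiftCorrelation n y = n * ∑ y ∈ orbit n x, sgn (dot n y x) := by
  have hconst : ∀ y ∈ orbit n x, shiftCorrelation n y = shiftCorrelation n x := by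
    intro y hy
    obtain ⟨k, -, rfl⟩ := mem_image.1 hy
    exact congrFun (iterate_invariant (funext shiftCorrelation_shift :
      shiftCorrelation n ∘ shift n = shiftCorrelation n) k) x
  have hdvd : #(orbit n x) ∣ n := card_orbit x ▸ (isPeriodicPt_shift x).minimalPeriod_dvd
  rw [sum_congr rfl hconst, sum_const, shiftCorrelation,
    sum_range_iterate_shift (fun y => sgn (dot n y x)), smul_smul, Nat.mul_div_cancel' hdvd,
    nsmul_eq_mul]

lemma orbit_lam {O : Finset (Fin n → ZMod 2)} (hO : O ∈ orbits n) : orbit n (lam n O) = O := by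
  obtain ⟨x, -, rfl⟩ := mem_image.1 hO
  have hmin : ∃ y ∈ orbit n x, ∀ z ∈ orbit n x, vecToNat n y ≤ vecToNat n z :=
    exists_min_image _ _ ⟨x, iterate_shift_mem_orbit 0 x⟩
  rw [lam, dif_pos hmin]
  exact mem_orbit_iff_orbit_eq.1 hmin.choose_spec.1

open Fin.CommRing in
lemma natCast_mul_trace_rsbfMatrix :
    (n : ℤ) * (rsbfMatrix n).trace = ∑ k ∈ range n, cycleSum (k : ZMod n) :=
  calc (n : ℤ) * (rsbfMatrix n).trace
      = ∑ O ∈ orbits n, n * ∑ x ∈ O, sgn (dot n x (lam n O)) := by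
        rw [Matrix.trace, ← sum_coe_sort (orbits n), mul_sum]; rfl
    _ = ∑ O ∈ orbits n, ∑ y ∈ O, shiftCorrelation n y := sum_congr rfl fun O hO => by
        have h := sum_orbit_shiftCorrelation (lam n O)
        rw [orbit_lam hO] at h
        exact h.symm
    _ = ∑ k ∈ range n, ∑ y, sgn (dot n ((shift n)^[k] y) y) := by
        rw [sum_orbits, sum_comm]; rfl
    _ = ∑ k ∈ range n, cycleSum (k : ZMod n) := sum_congr rfl fun k _ => by
        rw [← map_natCast (ZMod.finEquiv n), ← RingEquiv.coe_toAddEquiv, cycleSum_map]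
        simp only [cycleSum, dot, iterate_shift_apply]

end Orbits

lemma natCast_mul_trace_rsbfMatrix_eq_sum_divisors (n : ℕ) [NeZero n] :
    (n : ℤ) * (rsbfMatrix n).trace =
      ∑ d ∈ n.divisors.filter (fun d => Even (n / d)),
        (Nat.totient (n / d) : ℤ) * 2 ^ (n / 2 + d) := by
  rw [natCast_mul_trace_rsbfMatrix, sum_congr rfl fun k _ => cycleSum_natCast n k,
    sum_range_comp_gcd n fun d => if Even (n / d) then (2 : ℤ) ^ (n / 2 + d) else 0, sum_filter]
  simp only [nsmul_eq_mul, mul_ite, mul_zero]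

lemma div_two_mem_divisors_filter {n : ℕ} (hn : n ≠ 0) (hne : Even n) :
    n / 2 ∈ n.divisors.filter (fun d => Even (n / d)) := by
  obtain ⟨t, rfl⟩ := hne
  have ht : (t + t) / t = 2 := by rw [← two_mul, Nat.mul_div_cancel _ (by omega)]
  rw [mem_filter, Nat.mem_divisors, show (t + t) / 2 = t by omega, ht]
  exact ⟨⟨⟨2, by ring⟩, hn⟩, even_two⟩

/-- For even `n > 2`, a closed formula for the trace of `ₙ𝒜`; in particular
the trace is positive. -/
theorem trace_rsbfMatrix_even (n : ℕ) (hn : 2 < n) (hne : Even n) :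
    (((Matrix.trace (rsbfMatrix n) : ℤ) : ℚ) =
      (1 / n) * 2 ^ (n / 2) *
        ∑ d ∈ n.divisors.filter (fun d => Even (n / d)),
          (Nat.totient (n / d) : ℚ) * 2 ^ d) ∧
    0 < Matrix.trace (rsbfMatrix n) := by
  have : NeZero n := ⟨by omega⟩
  have key := natCast_mul_trace_rsbfMatrix_eq_sum_divisors n
  have hpos : 0 < ∑ d ∈ n.divisors.filter (fun d => Even (n / d)),
      (Nat.totient (n / d) : ℤ) * 2 ^ (n / 2 + d) := by
    have hφ : 0 < Nat.totient (n / (n / 2)) :=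
      Nat.totient_pos.2 (Nat.div_pos (Nat.div_le_self n 2) (by omega))
    exact sum_pos' (fun d _ => by positivity)
      ⟨n / 2, div_two_mem_divisors_filter (by omega) hne, by positivity⟩
  refine ⟨?_, pos_of_mul_pos_right (key ▸ hpos) (by positivity)⟩
  have keyQ : (n : ℚ) * ((rsbfMatrix n).trace : ℚ) =
      ∑ d ∈ n.divisors.filter (fun d => Even (n / d)),
        (Nat.totient (n / d) : ℚ) * 2 ^ (n / 2 + d) := by
    exact_mod_cast key
  rw [mul_assoc, mul_sum]
  simp only [pow_add, mul_left_comm _ ((2 : ℚ) ^ (n / 2))] at keyQ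
  rw [← keyQ]
  field_simp
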